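/- Let C be a traced symmetric monoidal category which is monoidal closed and possesses an initial object 0 and a terminal object ⊤. Then 0 and ⊤ are isomorphic (the category is pointed): since A ↦ A ⊗ B preserves colimits, 0 ⊗ ⊤ ≅ 0 ≅ 0 ⊗ 0, and tracing the unique isomorphism f : 0 ⊗ ⊤ → 0 ⊗ 0 over 0 yields a morphism Tr_0(f) : ⊤ → 0, whence ⊤ ≅ 0. -/

import Mathlib

open CategoryTheory MonoidalCategory Limits

/-!
Since `X ⊗ -` is a left adjoint, `⊥ ⊗ ⊤ ≅ ⊤ ⊗ ⊥` is initial, so there is a morphism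
`⊥ ⊗ ⊤ ⟶ ⊥ ⊗ ⊥`; tracing out `⊥` gives `⊤ ⟶ ⊥`, and any such morphism is an isomorphism.
-/

/-- A trace operator on a symmetric monoidal category `C`, in the sense of
Joyal–Street–Verity: a family of functions
`Tr_X : C(X ⊗ A, X ⊗ B) → C(A, B)` satisfying naturality, strength
(superposing), symmetry sliding and yanking. -/
structure TraceOperator (C : Type*) [Category C] [MonoidalCategory C]
    [SymmetricCategory C] where
  tr : ∀ (X : C) {A B : C}, (X ⊗ A ⟶ X ⊗ B) → (A ⟶ B)
  naturality : ∀ (X : C) {A A' B B' : C} (g : A' ⟶ A) (h : B ⟶ B')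
      (f : X ⊗ A ⟶ X ⊗ B),
      tr X ((X ◁ g) ≫ f ≫ (X ◁ h)) = g ≫ tr X f ≫ h
  strength : ∀ (X : C) {A B A' B' : C} (f : X ⊗ A ⟶ X ⊗ B) (g : A' ⟶ B'),
      tr X ((α_ X A A').inv ≫ (f ⊗ₘ g) ≫ (α_ X B B').hom) = tr X f ⊗ₘ g
  sliding : ∀ (X Y : C) {A B : C} (f : (Y ⊗ X) ⊗ A ⟶ (X ⊗ Y) ⊗ B),
      tr X (tr Y ((α_ Y X A).inv ≫ f ≫ ((β_ X Y).hom ▷ B) ≫ (α_ Y X B).hom)) =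
      tr Y (tr X ((α_ X Y A).inv ≫ ((β_ X Y).hom ▷ A) ≫ f ≫ (α_ X Y B).hom))
  yanking : ∀ X : C, tr X (β_ X X).hom = 𝟙 X

namespace CategoryTheory

variable {C : Type*} [Category C]

def Limits.IsTerminal.isoOfHomToInitial {T I : C} (hT : IsTerminal T) (hI : IsInitial I)
    (f : T ⟶ I) : T ≅ I where
  hom := f
  inv := hI.to T
  hom_inv_id := hT.hom_ext _ _
  inv_hom_id := hI.hom_ext _ _

variable [MonoidalCategory C]

noncomputable def MonoidalClosed.isInitialTensorLeft (X : C) [Closed X] {I : C}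
    (hI : IsInitial I) : IsInitial (X ⊗ I) :=
  hI.isInitialObj (tensorLeft X)

noncomputable def MonoidalClosed.isInitialTensorRight [BraidedCategory C] (X : C) [Closed X]
    {I : C} (hI : IsInitial I) : IsInitial (I ⊗ X) :=
  (isInitialTensorLeft X hI).ofIso (β_ X I)

end CategoryTheory

def TraceOperator.homOfIsInitialTensor {C : Type*} [Category C] [MonoidalCategory C]
    [SymmetricCategory C] (T : TraceOperator C) {X A : C} (h : IsInitial (X ⊗ A)) (B : C) :
    A ⟶ B :=
  T.tr X (h.to (X ⊗ B))

/-- **Statement 2.** Let `C` be a traced symmetric monoidal category which is monoidal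
closed and possesses an initial object `0` and a terminal object `⊤`.  Then `0` and `⊤`
are isomorphic (the category is pointed). -/
theorem statement2 {C : Type*} [Category C] [MonoidalCategory C] [SymmetricCategory C]
    (T : TraceOperator C) [MonoidalClosed C] [HasInitial C] [HasTerminal C] :
    Nonempty ((⊤_ C) ≅ (⊥_ C)) :=
  ⟨terminalIsTerminal.isoOfHomToInitial initialIsInitial <|
    T.homOfIsInitialTensor (MonoidalClosed.isInitialTensorRight (⊤_ C) initialIsInitial) _⟩
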